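/- Consider the Lie algebra L_{9,58} = sl(2,R) ⋉_{D_1 ⊕ D_{1/2} ⊕ D_0} (h_1 ⊕ 3L_1) with nonzero brackets [X_1,X_2]=2X_2, [X_1,X_3]=−2X_3, [X_2,X_3]=X_1, [X_1,X_4]=2X_4, [X_1,X_6]=−2X_6, [X_1,X_7]=X_7, [X_1,X_8]=−X_8, [X_2,X_5]=2X_4, [X_2,X_6]=X_5, [X_2,X_8]=X_7, [X_3,X_4]=X_5, [X_3,X_5]=2X_6, [X_3,X_7]=X_8, [X_7,X_8]=X_9. Then the functions I_1 = x_9, I_2 = x_5² − 4 x_4 x_6, I_3 = x_1 x_5 x_9 − x_4 x_8² − x_6 x_7² + x_5 x_7 x_8 + 2 x_9 (x_2 x_6 − x_3 x_4) satisfy \hat{X}_i(I_m) = 0 for all i = 1,...,9 and m = 1,2,3. -/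

import Mathlib

open Finset

noncomputable def Xhat (C : Fin 9 → Fin 9 → Fin 9 → ℝ) (i : Fin 9)
    (F : (Fin 9 → ℝ) → ℝ) : (Fin 9 → ℝ) → ℝ :=
  fun x => ∑ j : Fin 9, (∑ k : Fin 9, C i j k * x k) * fderiv ℝ F x (Pi.single j 1)

noncomputable def Lhalf : Fin 9 → Fin 9 → Fin 9 → ℝ := fun i j k =>
  if (i, j, k) = ((0 : Fin 9), (1 : Fin 9), (1 : Fin 9)) then (2 : ℝ) else
  if (i, j, k) = ((0 : Fin 9), (2 : Fin 9), (2 : Fin 9)) then (-2 : ℝ) else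
  if (i, j, k) = ((1 : Fin 9), (2 : Fin 9), (0 : Fin 9)) then (1 : ℝ) else
  if (i, j, k) = ((0 : Fin 9), (3 : Fin 9), (3 : Fin 9)) then (2 : ℝ) else
  if (i, j, k) = ((0 : Fin 9), (5 : Fin 9), (5 : Fin 9)) then (-2 : ℝ) else
  if (i, j, k) = ((0 : Fin 9), (6 : Fin 9), (6 : Fin 9)) then (1 : ℝ) else
  if (i, j, k) = ((0 : Fin 9), (7 : Fin 9), (7 : Fin 9)) then (-1 : ℝ) else
  if (i, j, k) = ((1 : Fin 9), (4 : Fin 9), (3 : Fin 9)) then (2 : ℝ) else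
  if (i, j, k) = ((1 : Fin 9), (5 : Fin 9), (4 : Fin 9)) then (1 : ℝ) else
  if (i, j, k) = ((1 : Fin 9), (7 : Fin 9), (6 : Fin 9)) then (1 : ℝ) else
  if (i, j, k) = ((2 : Fin 9), (3 : Fin 9), (4 : Fin 9)) then (1 : ℝ) else
  if (i, j, k) = ((2 : Fin 9), (4 : Fin 9), (5 : Fin 9)) then (2 : ℝ) else
  if (i, j, k) = ((2 : Fin 9), (6 : Fin 9), (7 : Fin 9)) then (1 : ℝ) else
  if (i, j, k) = ((6 : Fin 9), (7 : Fin 9), (8 : Fin 9)) then (1 : ℝ) else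
  0

noncomputable def C (i j k : Fin 9) : ℝ := Lhalf i j k - Lhalf j i k

noncomputable def I₁ : (Fin 9 → ℝ) → ℝ := fun x => x 8
noncomputable def I₂ : (Fin 9 → ℝ) → ℝ := fun x => (x 4)^2 - 4 * x 3 * x 5
noncomputable def I₃ : (Fin 9 → ℝ) → ℝ :=
  fun x => x 0 * x 4 * x 8 - x 3 * (x 7)^2 - x 5 * (x 6)^2 + x 4 * x 6 * x 7
    + 2 * x 8 * (x 1 * x 5 - x 2 * x 3)

theorem Xhat_eq_fderiv (C : Fin 9 → Fin 9 → Fin 9 → ℝ) (i : Fin 9) (F : (Fin 9 → ℝ) → ℝ)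
    (x : Fin 9 → ℝ) :
    Xhat C i F x = fderiv ℝ F x (fun j => ∑ k, C i j k * x k) := by
  conv_rhs => rw [← Finset.univ_sum_single (fun j => ∑ k, C i j k * x k)]
  simp only [Xhat, map_sum]
  congr! with j
  rw [← smul_eq_mul, ← map_smul, ← Pi.single_smul', smul_eq_mul, mul_one]

theorem fderiv_I₁ (x v : Fin 9 → ℝ) : fderiv ℝ I₁ x v = v 8 := by
  unfold I₁
  simp (disch := fun_prop) [fderiv_apply]

theorem fderiv_I₂ (x v : Fin 9 → ℝ) :
    fderiv ℝ I₂ x v = 2 * x 4 * v 4 - 4 * (v 3 * x 5 + x 3 * v 5) := by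
  unfold I₂
  simp (disch := fun_prop) [fderiv_fun_sub, fderiv_fun_mul, sq, fderiv_apply]
  ring

theorem fderiv_I₃ (x v : Fin 9 → ℝ) :
    fderiv ℝ I₃ x v =
      v 0 * x 4 * x 8 + x 0 * v 4 * x 8 + x 0 * x 4 * v 8
      - (v 3 * x 7 ^ 2 + 2 * x 3 * x 7 * v 7)
      - (v 5 * x 6 ^ 2 + 2 * x 5 * x 6 * v 6)
      + (v 4 * x 6 * x 7 + x 4 * v 6 * x 7 + x 4 * x 6 * v 7)
      + 2 * v 8 * (x 1 * x 5 - x 2 * x 3)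
      + 2 * x 8 * (v 1 * x 5 + x 1 * v 5 - v 2 * x 3 - x 2 * v 3) := by
  unfold I₃
  simp (disch := fun_prop) [fderiv_fun_add, fderiv_fun_sub, fderiv_fun_mul, sq, fderiv_apply]
  ring

theorem Xhat_I₁ (i : Fin 9) (x : Fin 9 → ℝ) : Xhat C i I₁ x = 0 := by
  rw [Xhat_eq_fderiv, fderiv_I₁]
  fin_cases i <;> simp [C, Lhalf]

theorem Xhat_I₂ (i : Fin 9) (x : Fin 9 → ℝ) : Xhat C i I₂ x = 0 := by
  rw [Xhat_eq_fderiv, fderiv_I₂]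
  fin_cases i <;> simp [C, Lhalf, -mul_eq_zero] <;> ring

theorem Xhat_I₃ (i : Fin 9) (x : Fin 9 → ℝ) : Xhat C i I₃ x = 0 := by
  rw [Xhat_eq_fderiv, fderiv_I₃]
  fin_cases i <;> simp [C, Lhalf, -mul_eq_zero] <;> ring

theorem invariants_L9_58 :
    ∀ (i : Fin 9) (x : Fin 9 → ℝ),
      Xhat C i I₁ x = 0 ∧ Xhat C i I₂ x = 0 ∧ Xhat C i I₃ x = 0 :=
  fun i x => ⟨Xhat_I₁ i x, Xhat_I₂ i x, Xhat_I₃ i x⟩
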